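/- arXiv:2603.02488 — 3 statements merged into one kernel-verified Lean document; each statement's English description precedes it below -/
import Mathlib

section
/- Let $k \ge p \ge 1$ and let $A, B$ be $n \times d$ matrices with nonnegative entries such that $B = A + D$ for some nonnegative matrix $D$ (i.e., $A \le B$ entrywise). Define $G(X) = \left(\sum_{i=1}^n \left(\sum_{j=1}^d X_{i,j}^p\right)^{k/p}\right)^{1/k}$. If $G(A) \ge (1-\beta) G(B)$ for some $\beta \in [0,1]$, then $G(D) \le (k\beta)^{1/k} \cdot G(B)$. -/
/-!
Write `S X = G X ^ k = ∑ i, (∑ j, X i j ^ p) ^ (k / p)`. Since `t ↦ t ^ q` is superadditive on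
`[0, ∞)` for `q ≥ 1`, applying this with `q = p` inside the rows and `q = k / p` across them gives
`S A + S D ≤ S (A + D)`. The hypothesis says `(1 - β) ^ k * S (A + D) ≤ S A`, so by Bernoulli's
inequality `S D ≤ (1 - (1 - β) ^ k) * S (A + D) ≤ k * β * S (A + D)`; take `k`-th roots.
-/

theorem Finset.sum_rpow_add_sum_rpow_le {ι : Type*} (s : Finset ι) {f g : ι → ℝ} {q : ℝ}
    (hf : ∀ i ∈ s, 0 ≤ f i) (hg : ∀ i ∈ s, 0 ≤ g i) (hq : 1 ≤ q) :
    ∑ i ∈ s, f i ^ q + ∑ i ∈ s, g i ^ q ≤ ∑ i ∈ s, (f i + g i) ^ q := by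
  rw [← sum_add_distrib]
  exact sum_le_sum fun i hi => Real.add_rpow_le_rpow_add (hf i hi) (hg i hi) hq

theorem sum_rpow_sum_rpow_add_le {ι κ : Type*} [Fintype ι] [Fintype κ] {X Y : ι → κ → ℝ}
    {p q : ℝ} (hX : ∀ i j, 0 ≤ X i j) (hY : ∀ i j, 0 ≤ Y i j) (hp : 1 ≤ p) (hq : 1 ≤ q) :
    ∑ i, (∑ j, X i j ^ p) ^ q + ∑ i, (∑ j, Y i j ^ p) ^ q ≤
      ∑ i, (∑ j, (X i j + Y i j) ^ p) ^ q := by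
  have hrow : ∀ (Z : ι → κ → ℝ), (∀ i j, 0 ≤ Z i j) → ∀ i, 0 ≤ ∑ j, Z i j ^ p :=
    fun Z hZ i => Finset.sum_nonneg fun j _ => Real.rpow_nonneg (hZ i j) p
  calc ∑ i, (∑ j, X i j ^ p) ^ q + ∑ i, (∑ j, Y i j ^ p) ^ q
      ≤ ∑ i, (∑ j, X i j ^ p + ∑ j, Y i j ^ p) ^ q :=
        Finset.univ.sum_rpow_add_sum_rpow_le (fun i _ => hrow X hX i) (fun i _ => hrow Y hY i) hq
    _ ≤ ∑ i, (∑ j, (X i j + Y i j) ^ p) ^ q := by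
        gcongr with i
        · exact add_nonneg (hrow X hX i) (hrow Y hY i)
        · exact Finset.univ.sum_rpow_add_sum_rpow_le (fun j _ => hX i j) (fun j _ => hY i j) hp

theorem rpow_one_div_le_of_add_le {a b c k β : ℝ} (ha : 0 ≤ a) (hc : 0 ≤ c) (hk : 1 ≤ k)
    (hβ0 : 0 ≤ β) (hβ1 : β ≤ 1) (hsum : a + c ≤ b) (h : (1 - β) * b ^ (1 / k) ≤ a ^ (1 / k)) :
    c ^ (1 / k) ≤ (k * β) ^ (1 / k) * b ^ (1 / k) := by
  have hk0 : 0 < k := one_pos.trans_le hk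
  have hb : 0 ≤ b := by linarith
  have hroot_pow : ∀ x : ℝ, 0 ≤ x → (x ^ (1 / k)) ^ k = x := fun x hx => by
    rw [← Real.rpow_mul hx, one_div_mul_cancel hk0.ne', Real.rpow_one]
  have hpow : (1 - β) ^ k * b ≤ a := by
    have := Real.rpow_le_rpow (by positivity) h hk0.le
    rwa [Real.mul_rpow (by linarith) (by positivity), hroot_pow b hb, hroot_pow a ha] at this
  have hbernoulli : 1 - k * β ≤ (1 - β) ^ k := by
    simpa [sub_eq_add_neg] using one_add_mul_self_le_rpow_one_add (s := -β) (by linarith) hk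
  have hc_le : c ≤ k * β * b := by nlinarith
  calc c ^ (1 / k) ≤ (k * β * b) ^ (1 / k) := by gcongr
    _ = (k * β) ^ (1 / k) * b ^ (1 / k) := Real.mul_rpow (by positivity) hb

open Finset in
theorem cascaded_norm_diff_bound (n d : ℕ) (k p β : ℝ) (hp : 1 ≤ p) (hkp : p ≤ k)
    (hβ0 : 0 ≤ β) (hβ1 : β ≤ 1)
    (A D : Fin n → Fin d → ℝ) (hA : ∀ i j, 0 ≤ A i j) (hD : ∀ i j, 0 ≤ D i j)
    (G : (Fin n → Fin d → ℝ) → ℝ)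
    (hG : ∀ X, G X = (∑ i, (∑ j, (X i j) ^ p) ^ (k / p)) ^ (1 / k))
    (h : (1 - β) * G (fun i j => A i j + D i j) ≤ G A) :
    G D ≤ (k * β) ^ (1 / k) * G (fun i j => A i j + D i j) := by
  have hkp_ratio : 1 ≤ k / p := (one_le_div (one_pos.trans_le hp)).mpr hkp
  have hsum_nonneg : ∀ X : Fin n → Fin d → ℝ, (∀ i j, 0 ≤ X i j) →
      0 ≤ ∑ i, (∑ j, X i j ^ p) ^ (k / p) := fun X hX =>
    sum_nonneg fun i _ => Real.rpow_nonneg (sum_nonneg fun j _ => Real.rpow_nonneg (hX i j) p) _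
  rw [hG, hG] at h ⊢
  exact rpow_one_div_le_of_add_le (hsum_nonneg A hA) (hsum_nonneg D hD) (hp.trans hkp) hβ0 hβ1
    (sum_rpow_sum_rpow_add_le hA hD hp hkp_ratio) h
end

section
/- Let $k \ge p \ge 1$, let $A, B, C$ be $n \times d$ matrices with nonnegative entries such that $A \le B$ entrywise, and let $\varepsilon \in (0,1)$. Define $G(X) = \left(\sum_{i=1}^n \left(\sum_{j=1}^d X_{i,j}^p\right)^{k/p}\right)^{1/k}$ and set $\beta = \varepsilon^k / k$. If $G(A) \ge (1-\beta) G(B)$, then $G(A+C) \ge (1-\varepsilon) G(B+C)$. -/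
open Finset

private lemma real_add_rpow_le {a b q : ℝ} (ha : 0 ≤ a) (hb : 0 ≤ b) (hq : 1 ≤ q) :
    a ^ q + b ^ q ≤ (a + b) ^ q := by
  have := NNReal.add_rpow_le_rpow_add (NNReal.mk a ha) (NNReal.mk b hb) hq
  have := NNReal.coe_le_coe.2 this
  push_cast at this
  simpa using this

open Finset in
theorem cascaded_norm_smooth (n d : ℕ) (k p ε : ℝ) (hp : 1 ≤ p) (hkp : p ≤ k)
    (hε0 : 0 < ε) (hε1 : ε < 1)
    (A B C : Fin n → Fin d → ℝ) (hA : ∀ i j, 0 ≤ A i j) (hB : ∀ i j, 0 ≤ B i j)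
    (hC : ∀ i j, 0 ≤ C i j) (hAB : ∀ i j, A i j ≤ B i j)
    (G : (Fin n → Fin d → ℝ) → ℝ)
    (hG : ∀ X, G X = (∑ i, (∑ j, (X i j) ^ p) ^ (k / p)) ^ (1 / k))
    (h : (1 - ε ^ k / k) * G B ≤ G A) :
    (1 - ε) * G (fun i j => B i j + C i j) ≤ G (fun i j => A i j + C i j) := by
  have hk1 : (1:ℝ) ≤ k := hp.trans hkp
  have hk0 : (0:ℝ) < k := lt_of_lt_of_le one_pos hk1
  have hp0 : (0:ℝ) < p := lt_of_lt_of_le one_pos hp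
  have hkp1 : (1:ℝ) ≤ k / p := (one_le_div hp0).2 hkp
  -- inner sums nonneg
  have hS : ∀ (X : Fin n → Fin d → ℝ), (∀ i j, 0 ≤ X i j) → ∀ i, (0:ℝ) ≤ ∑ j, X i j ^ p :=
    fun X hX i => Finset.sum_nonneg fun j _ => Real.rpow_nonneg (hX i j) p
  have hF : ∀ (X : Fin n → Fin d → ℝ), (∀ i j, 0 ≤ X i j) →
      (0:ℝ) ≤ ∑ i, (∑ j, X i j ^ p) ^ (k / p) :=
    fun X hX => Finset.sum_nonneg fun i _ => Real.rpow_nonneg (hS X hX i) _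
  have hGnn : ∀ (X : Fin n → Fin d → ℝ), (∀ i j, 0 ≤ X i j) → 0 ≤ G X := by
    intro X hX; rw [hG]; exact Real.rpow_nonneg (hF X hX) _
  -- G X ^ k = F X
  have hGk : ∀ (X : Fin n → Fin d → ℝ), (∀ i j, 0 ≤ X i j) →
      G X ^ k = ∑ i, (∑ j, X i j ^ p) ^ (k / p) := by
    intro X hX
    rw [hG, ← Real.rpow_mul (hF X hX), one_div, inv_mul_cancel₀ (ne_of_gt hk0), Real.rpow_one]
  -- monotonicity
  have hmono : ∀ (X Y : Fin n → Fin d → ℝ), (∀ i j, 0 ≤ X i j) → (∀ i j, X i j ≤ Y i j) →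
      G X ≤ G Y := by
    intro X Y hX hXY
    rw [hG, hG]
    apply Real.rpow_le_rpow (hF X hX) _ (by positivity)
    apply Finset.sum_le_sum
    intro i _
    apply Real.rpow_le_rpow (hS X hX i) _ (by positivity)
    exact Finset.sum_le_sum fun j _ =>
      Real.rpow_le_rpow (hX i j) (hXY i j) (le_of_lt hp0)
  -- superadditivity of G^k
  have hsuper : ∀ (X Y : Fin n → Fin d → ℝ), (∀ i j, 0 ≤ X i j) → (∀ i j, 0 ≤ Y i j) →
      G X ^ k + G Y ^ k ≤ G (fun i j => X i j + Y i j) ^ k := by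
    intro X Y hX hY
    rw [hGk X hX, hGk Y hY, hGk _ (fun i j => add_nonneg (hX i j) (hY i j))]
    rw [← Finset.sum_add_distrib]
    apply Finset.sum_le_sum
    intro i _
    calc (∑ j, X i j ^ p) ^ (k/p) + (∑ j, Y i j ^ p) ^ (k/p)
        ≤ ((∑ j, X i j ^ p) + (∑ j, Y i j ^ p)) ^ (k/p) :=
          real_add_rpow_le (hS X hX i) (hS Y hY i) hkp1
      _ ≤ (∑ j, (X i j + Y i j) ^ p) ^ (k/p) := by
          apply Real.rpow_le_rpow (add_nonneg (hS X hX i) (hS Y hY i)) _ (by positivity)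
          rw [← Finset.sum_add_distrib]
          exact Finset.sum_le_sum fun j _ => real_add_rpow_le (hX i j) (hY i j) hp
  -- rewrite G in nested 1/p form
  have key : ∀ (Z : Fin n → Fin d → ℝ), (∀ i j, 0 ≤ Z i j) →
      G Z = (∑ i, ((∑ j, Z i j ^ p) ^ (1/p)) ^ k) ^ (1/k) := by
    intro Z hZ
    rw [hG]
    congr 1
    refine Finset.sum_congr rfl fun i _ => ?_
    rw [← Real.rpow_mul (hS Z hZ i)]
    ring_nf
  -- triangle inequality
  have htri : ∀ (X Y : Fin n → Fin d → ℝ), (∀ i j, 0 ≤ X i j) → (∀ i j, 0 ≤ Y i j) →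
      G (fun i j => X i j + Y i j) ≤ G X + G Y := by
    intro X Y hX hY
    rw [key _ (fun i j => add_nonneg (hX i j) (hY i j)), key X hX, key Y hY]
    have step1 : ∀ i, (∑ j, (X i j + Y i j) ^ p) ^ (1/p) ≤
        (∑ j, X i j ^ p) ^ (1/p) + (∑ j, Y i j ^ p) ^ (1/p) := by
      intro i
      exact Real.Lp_add_le_of_nonneg Finset.univ hp (fun j _ => hX i j) (fun j _ => hY i j)
    calc (∑ i, ((∑ j, (X i j + Y i j) ^ p) ^ (1/p)) ^ k) ^ (1/k)
        ≤ (∑ i, ((∑ j, X i j ^ p) ^ (1/p) + (∑ j, Y i j ^ p) ^ (1/p)) ^ k) ^ (1/k) := by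
          apply Real.rpow_le_rpow
            (Finset.sum_nonneg fun i _ => Real.rpow_nonneg
              (Real.rpow_nonneg (hS _ (fun i j => add_nonneg (hX i j) (hY i j)) i) _) _) _
            (by positivity)
          refine Finset.sum_le_sum fun i _ => ?_
          exact Real.rpow_le_rpow
            (Real.rpow_nonneg (hS _ (fun i j => add_nonneg (hX i j) (hY i j)) i) _)
            (step1 i) (le_of_lt hk0)
      _ ≤ _ := Real.Lp_add_le_of_nonneg Finset.univ hk1
          (fun i _ => Real.rpow_nonneg (hS X hX i) _)
          (fun i _ => Real.rpow_nonneg (hS Y hY i) _)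
  -- the main argument
  set D : Fin n → Fin d → ℝ := fun i j => B i j - A i j with hD
  have hDnn : ∀ i j, 0 ≤ D i j := fun i j => sub_nonneg.2 (hAB i j)
  have hβ : ε ^ k / k ≤ ε ^ k := by
    apply div_le_self (Real.rpow_nonneg hε0.le k) hk1
  have hεk1 : ε ^ k < 1 := by
    calc ε ^ k ≤ ε ^ (1:ℝ) := Real.rpow_le_rpow_of_exponent_ge hε0 hε1.le hk1
    _ = ε := Real.rpow_one ε
    _ < 1 := hε1
  have hβ1 : ε ^ k / k < 1 := lt_of_le_of_lt hβ hεk1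
  have hβ0 : 0 ≤ ε ^ k / k := div_nonneg (Real.rpow_nonneg hε0.le k) hk0.le
  -- Bernoulli: (1 - β)^k ≥ 1 - k β = 1 - ε^k
  have hbern : 1 - ε ^ k ≤ (1 - ε ^ k / k) ^ k := by
    have := one_add_mul_self_le_rpow_one_add (s := -(ε ^ k / k)) (by linarith) hk1
    have hkc : k * -(ε ^ k / k) = -(ε ^ k) := by field_simp
    rw [hkc] at this
    calc 1 - ε ^ k = 1 + -(ε ^ k) := by ring
    _ ≤ (1 + -(ε ^ k / k)) ^ k := this
    _ = (1 - ε ^ k / k) ^ k := by rw [← sub_eq_add_neg]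
  -- G D ≤ ε * G B
  have hGD : G D ≤ ε * G B := by
    have hsum : G A ^ k + G D ^ k ≤ G B ^ k := by
      have := hsuper A D hA hDnn
      have hBeq : (fun i j => A i j + D i j) = B := by
        funext i j; simp [hD]
      rwa [hBeq] at this
    have hGA : ((1 - ε ^ k / k) * G B) ^ k ≤ G A ^ k :=
      Real.rpow_le_rpow (mul_nonneg (by linarith) (hGnn B hB)) h hk0.le
    have hmul : ((1 - ε ^ k / k) * G B) ^ k = (1 - ε ^ k / k) ^ k * G B ^ k :=
      Real.mul_rpow (by linarith) (hGnn B hB)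
    have hGDk : G D ^ k ≤ ε ^ k * G B ^ k := by
      have h1 : (1 - ε ^ k) * G B ^ k ≤ G A ^ k := by
        calc (1 - ε ^ k) * G B ^ k ≤ (1 - ε ^ k / k) ^ k * G B ^ k :=
              mul_le_mul_of_nonneg_right hbern (Real.rpow_nonneg (hGnn B hB) k)
          _ = ((1 - ε ^ k / k) * G B) ^ k := hmul.symm
          _ ≤ G A ^ k := hGA
      nlinarith [Real.rpow_nonneg (hGnn B hB) k]
    have : G D ^ k ≤ (ε * G B) ^ k := by
      rwa [Real.mul_rpow hε0.le (hGnn B hB)]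
    exact (Real.rpow_le_rpow_iff (hGnn D hDnn) (mul_nonneg hε0.le (hGnn B hB)) hk0).1 this
  -- final assembly
  have hABC : G (fun i j => B i j + C i j) ≤ G (fun i j => A i j + C i j) + G D := by
    have heq : (fun i j => B i j + C i j) = (fun i j => (A i j + C i j) + D i j) := by
      funext i j; simp [hD]; ring
    rw [heq]
    exact htri _ D (fun i j => add_nonneg (hA i j) (hC i j)) hDnn
  have hBmono : G B ≤ G (fun i j => B i j + C i j) :=
    hmono B _ hB (fun i j => by linarith [hC i j])
  have hεmul : ε * G B ≤ ε * G (fun i j => B i j + C i j) :=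
    mul_le_mul_of_nonneg_left hBmono hε0.le
  nlinarith [hGnn (fun i j => B i j + C i j) (fun i j => add_nonneg (hB i j) (hC i j))]
end

section
/- Let $p \ge 1$ and $\varepsilon \in (0,1)$, and set $\beta = \varepsilon^p / p^p$. Let $a, b, c \in \mathbb{R}^n$ be vectors with nonnegative entries such that $a \le b$ entrywise. If $\|a\|_p \ge (1-\beta)^{1/p} \|b\|_p$ (equivalently $\|a\|_p^p \ge (1-\beta)\|b\|_p^p$), then $\|a+c\|_p^p \ge (1-\varepsilon)\|b+c\|_p^p$. -/
/-- MVT-type bound: `y^p - x^p ≤ p * y^(p-1) * (y - x)` for `0 ≤ x ≤ y`, `1 ≤ p`. -/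
lemma rpow_sub_rpow_le_aux {p : ℝ} (hp : 1 ≤ p) {x y : ℝ} (hx : 0 ≤ x) (hxy : x ≤ y) :
    y ^ p - x ^ p ≤ p * y ^ (p - 1) * (y - x) := by
  have hy : 0 ≤ y := hx.trans hxy
  rcases eq_or_lt_of_le hy with hy0 | hy0
  · have hx0 : x = 0 := le_antisymm (hxy.trans hy0.symm.le) hx
    simp [← hy0, hx0, Real.zero_rpow (by positivity : p ≠ 0)]
  · -- Bernoulli: 1 + p * s ≤ (1 + s)^p with s = x/y - 1
    have hs : (-1 : ℝ) ≤ x / y - 1 := by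
      have : 0 ≤ x / y := div_nonneg hx hy
      linarith
    have hb := one_add_mul_self_le_rpow_one_add hs hp
    have hxy' : (1 : ℝ) + (x / y - 1) = x / y := by ring
    rw [hxy'] at hb
    have hdiv : (x / y) ^ p = x ^ p / y ^ p := Real.div_rpow hx hy p
    rw [hdiv] at hb
    have hyp : (0 : ℝ) < y ^ p := Real.rpow_pos_of_pos hy0 p
    -- multiply by y^p
    have hb' : y ^ p * (1 + p * (x / y - 1)) ≤ x ^ p := by
      calc y ^ p * (1 + p * (x / y - 1)) ≤ y ^ p * (x ^ p / y ^ p) := by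
            exact mul_le_mul_of_nonneg_left hb hyp.le
        _ = x ^ p := by field_simp
    have hyp1 : y ^ p = y ^ (p - 1) * y := by
      rw [← Real.rpow_add_one hy0.ne' (p - 1)]; ring_nf
    have hxy2 : y ^ p * (x / y) = y ^ (p - 1) * x := by
      rw [hyp1]; field_simp
    nlinarith [hb', hxy2, hyp1]

/-- Superadditivity of `rpow` for `p ≥ 1`. -/
lemma rpow_superadd_aux {p : ℝ} (hp : 1 ≤ p) {x y : ℝ} (hx : 0 ≤ x) (hy : 0 ≤ y) :
    x ^ p + y ^ p ≤ (x + y) ^ p := by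
  rcases eq_or_lt_of_le (by positivity : (0:ℝ) ≤ x + y) with h0 | h0
  · have hx0 : x = 0 := by linarith
    have hy0 : y = 0 := by linarith
    simp [hx0, hy0, Real.zero_rpow (by positivity : p ≠ 0)]
  · have hp1 : (0:ℝ) ≤ p - 1 := by linarith
    have h1 : x ^ (p - 1) ≤ (x + y) ^ (p - 1) :=
      Real.rpow_le_rpow hx (by linarith) hp1
    have h2 : y ^ (p - 1) ≤ (x + y) ^ (p - 1) :=
      Real.rpow_le_rpow hy (by linarith) hp1
    have hxp : x ^ p = x * x ^ (p - 1) := by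
      rcases eq_or_lt_of_le hx with hx0 | hx0
      · simp [← hx0, Real.zero_rpow (by positivity : p ≠ 0)]
      · rw [← Real.rpow_one_add' hx (by positivity : (1:ℝ) + (p-1) ≠ 0)]; ring_nf
    have hyp : y ^ p = y * y ^ (p - 1) := by
      rcases eq_or_lt_of_le hy with hy0 | hy0
      · simp [← hy0, Real.zero_rpow (by positivity : p ≠ 0)]
      · rw [← Real.rpow_one_add' hy (by positivity : (1:ℝ) + (p-1) ≠ 0)]; ring_nf
    have hsum : (x + y) ^ p = (x + y) * (x + y) ^ (p - 1) := by
      rw [← Real.rpow_one_add' (by positivity : (0:ℝ) ≤ x + y) (by positivity : (1:ℝ) + (p-1) ≠ 0)]; ring_nf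
    rw [hxp, hyp, hsum]
    nlinarith [mul_le_mul_of_nonneg_left h1 hx, mul_le_mul_of_nonneg_left h2 hy]

open Finset in
theorem fp_moment_smooth (n : ℕ) (p ε : ℝ) (hp : 1 ≤ p) (hε0 : 0 < ε) (hε1 : ε < 1)
    (a b c : Fin n → ℝ) (ha : ∀ i, 0 ≤ a i) (hb : ∀ i, 0 ≤ b i) (hc : ∀ i, 0 ≤ c i)
    (hab : ∀ i, a i ≤ b i)
    (h : (1 - ε ^ p / p ^ p) * ∑ i, (b i) ^ p ≤ ∑ i, (a i) ^ p) :
    (1 - ε) * ∑ i, (b i + c i) ^ p ≤ ∑ i, (a i + c i) ^ p := by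
  have hp0 : (0:ℝ) < p := by linarith
  set S := ∑ i, (b i + c i) ^ p with hS
  set T := ∑ i, (a i + c i) ^ p with hT
  have hS0 : 0 ≤ S := sum_nonneg fun i _ => Real.rpow_nonneg (add_nonneg (hb i) (hc i)) p
  have hT0 : 0 ≤ T := sum_nonneg fun i _ => Real.rpow_nonneg (add_nonneg (ha i) (hc i)) p
  -- B ≤ S
  have hBS : ∑ i, (b i) ^ p ≤ S :=
    sum_le_sum fun i _ => Real.rpow_le_rpow (hb i) (by linarith [hc i]) hp0.le
  -- D := ∑ (b - a)^p ≤ (ε/p)^p * S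
  have hD : ∑ i, (b i - a i) ^ p ≤ (ε / p) ^ p * S := by
    have h1 : ∑ i, (b i - a i) ^ p ≤ ∑ i, (b i) ^ p - ∑ i, (a i) ^ p := by
      rw [← Finset.sum_sub_distrib]
      refine sum_le_sum fun i _ => ?_
      have := rpow_superadd_aux hp (ha i) (sub_nonneg.2 (hab i))
      have he : a i + (b i - a i) = b i := by ring
      rw [he] at this; linarith
    have h2 : ∑ i, (b i) ^ p - ∑ i, (a i) ^ p ≤ ε ^ p / p ^ p * ∑ i, (b i) ^ p := by
      nlinarith [h]
    have h3 : (ε / p) ^ p = ε ^ p / p ^ p := Real.div_rpow hε0.le hp0.le p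
    have h4 : ε ^ p / p ^ p * ∑ i, (b i) ^ p ≤ ε ^ p / p ^ p * S :=
      mul_le_mul_of_nonneg_left hBS (by positivity)
    rw [h3]; linarith
  -- main pointwise bound then Hölder (case p = 1 separately)
  rcases eq_or_lt_of_le hp with hp1 | hp1
  · -- p = 1
    have hp1' : p = 1 := hp1.symm
    subst hp1'
    simp only [Real.rpow_one] at *
    have : (1 - ε) * ∑ i, (b i + c i) ≤ ∑ i, (a i + c i) := by
      rw [Finset.sum_add_distrib, Finset.sum_add_distrib]
      have hcn : 0 ≤ ∑ i, c i := sum_nonneg fun i _ => hc i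
      have hbn : 0 ≤ ∑ i, b i := sum_nonneg fun i _ => hb i
      simp only [one_pow, div_one] at h
      nlinarith
    rw [hS, hT]
    simpa using this
  · -- 1 < p
    have hq := Real.HolderConjugate.conjExponent hp1
    set q := Real.conjExponent p with hqdef
    have hq1 : 0 < q := hq.symm.pos
    -- Step 1: S - T ≤ p * ∑ (b+c)^(p-1) * (b-a)
    have step1 : S - T ≤ p * ∑ i, (b i + c i) ^ (p - 1) * (b i - a i) := by
      rw [Finset.mul_sum, hS, hT, ← Finset.sum_sub_distrib]
      refine sum_le_sum fun i _ => ?_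
      have := rpow_sub_rpow_le_aux hp (add_nonneg (ha i) (hc i))
        (by linarith [hab i] : a i + c i ≤ b i + c i)
      have he : b i + c i - (a i + c i) = b i - a i := by ring
      rw [he] at this
      nlinarith [this]
    -- Step 2: Hölder
    have step2 : ∑ i, (b i + c i) ^ (p - 1) * (b i - a i) ≤
        S ^ (1 / q) * (∑ i, (b i - a i) ^ p) ^ (1 / p) := by
      have hold := Real.inner_le_Lp_mul_Lq_of_nonneg
        (f := fun i => b i - a i) (g := fun i => (b i + c i) ^ (p - 1))
        Finset.univ hq
        (fun i _ => sub_nonneg.2 (hab i))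
        (fun i _ => Real.rpow_nonneg (add_nonneg (hb i) (hc i)) (p-1))
      -- hold : ∑ f g ≤ (∑ f^q)^(1/q) * (∑ g^p)^(1/p), f = (b+c)^(p-1), g = b-a
      have hfq : ∀ i : Fin n, ((b i + c i) ^ (p - 1)) ^ q = (b i + c i) ^ p := by
        intro i
        rw [← Real.rpow_mul (add_nonneg (hb i) (hc i))]
        congr 1
        exact hq.sub_one_mul_conj
      simp only [hfq] at hold
      calc ∑ i, (b i + c i) ^ (p - 1) * (b i - a i)
          = ∑ i, (b i - a i) * (b i + c i) ^ (p - 1) := by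
            exact Finset.sum_congr rfl fun i _ => mul_comm _ _
        _ ≤ (∑ i, (b i - a i) ^ p) ^ (1 / p) * S ^ (1 / q) := hold
        _ = S ^ (1 / q) * (∑ i, (b i - a i) ^ p) ^ (1 / p) := mul_comm _ _
    -- Step 3: (∑ (b-a)^p)^(1/p) ≤ (ε/p) * S^(1/p)
    have hDn : 0 ≤ ∑ i, (b i - a i) ^ p :=
      sum_nonneg fun i _ => Real.rpow_nonneg (sub_nonneg.2 (hab i)) p
    have step3 : (∑ i, (b i - a i) ^ p) ^ (1 / p) ≤ (ε / p) * S ^ (1 / p) := by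
      have h1 : (∑ i, (b i - a i) ^ p) ^ (1 / p) ≤ ((ε / p) ^ p * S) ^ (1 / p) :=
        Real.rpow_le_rpow hDn hD (by positivity)
      have h2 : ((ε / p) ^ p * S) ^ (1 / p) = (ε / p) * S ^ (1 / p) := by
        rw [Real.mul_rpow (by positivity) hS0, ← Real.rpow_mul (by positivity : (0:ℝ) ≤ ε / p),
          mul_one_div, div_self hp0.ne', Real.rpow_one]
      linarith [h1, h2.le]
    -- combine
    have hsum1 : 1 / q + 1 / p = 1 := by
      rw [one_div, one_div]; exact hq.symm.inv_add_inv_eq_one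
    have hSplit : S ^ (1 / q) * S ^ (1 / p) = S := by
      rw [← Real.rpow_add' hS0 (by rw [hsum1]; norm_num), hsum1, Real.rpow_one]
    have hSq : 0 ≤ S ^ (1 / q) := Real.rpow_nonneg hS0 _
    have final : S - T ≤ ε * S := by
      have c1 : p * ∑ i, (b i + c i) ^ (p - 1) * (b i - a i) ≤
          p * (S ^ (1 / q) * ((ε / p) * S ^ (1 / p))) := by
        refine mul_le_mul_of_nonneg_left ?_ hp0.le
        calc ∑ i, (b i + c i) ^ (p - 1) * (b i - a i)
            ≤ S ^ (1 / q) * (∑ i, (b i - a i) ^ p) ^ (1 / p) := step2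
          _ ≤ S ^ (1 / q) * ((ε / p) * S ^ (1 / p)) :=
              mul_le_mul_of_nonneg_left step3 hSq
      have hpe : p * (ε / p) = ε := by field_simp
      have c2 : p * (S ^ (1 / q) * ((ε / p) * S ^ (1 / p))) = ε * S := by
        calc p * (S ^ (1 / q) * ((ε / p) * S ^ (1 / p)))
            = (p * (ε / p)) * (S ^ (1 / q) * S ^ (1 / p)) := by ring
          _ = ε * S := by rw [hpe, hSplit]
      linarith [step1, c1, c2.le]
    nlinarith [final, hS0]
end
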